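/- Let f, g be bounded continuous nonnegative functions on ℝ and define the nonlinear operator L[f](λ) = ∫_ℝ K(λ−μ)·log(1 + ρ·e^{f(μ)}/Θ(μ)) dμ, where K(λ) = ħ/(π(λ²+ħ²)), ρ > 0, and Θ : ℝ → ℝ is continuous with inf_{λ∈ℝ} Θ(λ) = J > 0. Then |L[f](λ) − L[g](λ)| ≤ (ρ·e^{M}/(J + ρ·e^{M}))·‖f − g‖_∞ for all λ ∈ ℝ, where M = max(‖f‖_∞, ‖g‖_∞). In particular, the contraction constant is strictly less than 1, so L has at most one fixed point in this class. -/

import Mathlib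

/-!
For fixed `T > 0` the map `t ↦ log (1 + ρ eᵗ / T)` has derivative `ρ eᵗ / (T + ρ eᵗ)`, which increases
in `t` and decreases in `T`; on `t ≤ M`, `T ≥ J` it is therefore at most `ρ e^M / (J + ρ e^M)`, a
Lipschitz constant for the integrand at every point. Since the Cauchy kernel is a probability density,
averaging against it preserves this bound.
-/

open MeasureTheory Real ProbabilityTheory

lemma div_add_le_div_add {x y J T : ℝ} (hx : 0 ≤ x) (hxy : x ≤ y) (hJ : 0 < J) (hJT : J ≤ T) :
    x / (T + x) ≤ y / (J + y) := by
  rw [div_le_div_iff₀ (by linarith) (by linarith)]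
  nlinarith [mul_le_mul hxy hJT hJ.le (hx.trans hxy)]

section LogOneAddExp

variable {ρ J T M : ℝ}

lemma hasDerivAt_log_one_add_mul_exp_div (hρ : 0 ≤ ρ) (hT : 0 < T) (t : ℝ) :
    HasDerivAt (fun t => log (1 + ρ * exp t / T)) (ρ * exp t / (T + ρ * exp t)) t := by
  have hinner : HasDerivAt (fun t => 1 + ρ * exp t / T) (ρ * exp t / T) t := by
    simpa using (((hasDerivAt_exp t).const_mul ρ).div_const T).const_add 1
  convert hinner.log (by positivity) using 1
  field_simp

lemma abs_log_one_add_mul_exp_div_sub_le (hρ : 0 ≤ ρ) (hJ : 0 < J) (hJT : J ≤ T) {a b : ℝ}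
    (ha : a ≤ M) (hb : b ≤ M) :
    |log (1 + ρ * exp a / T) - log (1 + ρ * exp b / T)|
      ≤ ρ * exp M / (J + ρ * exp M) * |a - b| := by
  have hT : 0 < T := hJ.trans_le hJT
  have hderiv : ∀ t ∈ Set.Iic M, HasDerivWithinAt (fun t => log (1 + ρ * exp t / T))
      (ρ * exp t / (T + ρ * exp t)) (Set.Iic M) t :=
    fun t _ => (hasDerivAt_log_one_add_mul_exp_div hρ hT t).hasDerivWithinAt
  have hbound : ∀ t ∈ Set.Iic M, ‖ρ * exp t / (T + ρ * exp t)‖ ≤ ρ * exp M / (J + ρ * exp M) := by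
    intro t ht
    rw [norm_of_nonneg (by positivity)]
    exact div_add_le_div_add (by positivity)
      (mul_le_mul_of_nonneg_left (exp_le_exp.2 ht) hρ) hJ hJT
  simpa only [norm_eq_abs] using
    (convex_Iic M).norm_image_sub_le_of_norm_hasDerivWithin_le hderiv hbound hb ha

lemma abs_log_one_add_mul_exp_div_le (hρ : 0 ≤ ρ) (hJ : 0 < J) (hJT : J ≤ T) {a : ℝ}
    (ha : a ≤ M) : |log (1 + ρ * exp a / T)| ≤ ρ * exp M / J := by
  have hT : 0 < T := hJ.trans_le hJT
  have hx : 0 ≤ ρ * exp a / T := by positivity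
  rw [abs_of_nonneg (log_nonneg (by linarith))]
  calc log (1 + ρ * exp a / T) ≤ ρ * exp a / T := by
        linarith [log_le_sub_one_of_pos (show 0 < 1 + ρ * exp a / T by linarith)]
    _ ≤ ρ * exp M / J :=
        div_le_div₀ (by positivity) (mul_le_mul_of_nonneg_left (exp_le_exp.2 ha) hρ) hJ hJT

lemma integrable_mul_log_one_add_mul_exp_div {α : Type*} [MeasurableSpace α] {μ : Measure α}
    {k u Θ : α → ℝ} (hk : Integrable k μ) (hu : Measurable u) (hΘ : Measurable Θ)
    (hρ : 0 ≤ ρ) (hJ : 0 < J) (hΘJ : ∀ x, J ≤ Θ x) (huM : ∀ x, u x ≤ M) :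
    Integrable (fun x => k x * log (1 + ρ * exp (u x) / Θ x)) μ := by
  refine (hk.bdd_mul (c := ρ * exp M / J) ?_ ?_).congr (.of_forall fun x => mul_comm _ _)
  · exact (by fun_prop : Measurable fun x => log (1 + ρ * exp (u x) / Θ x)).aestronglyMeasurable
  · exact .of_forall fun x => abs_log_one_add_mul_exp_div_le hρ hJ (hΘJ x) (huM x)

end LogOneAddExp

lemma abs_integral_mul_sub_integral_mul_le {α : Type*} [MeasurableSpace α] {μ : Measure α}
    {k φ ψ : α → ℝ} {C : ℝ} (hk0 : ∀ x, 0 ≤ k x) (hk : Integrable k μ)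
    (hφ : Integrable (fun x => k x * φ x) μ) (hψ : Integrable (fun x => k x * ψ x) μ)
    (hφψ : ∀ x, |φ x - ψ x| ≤ C) :
    |∫ x, k x * φ x ∂μ - ∫ x, k x * ψ x ∂μ| ≤ C * ∫ x, k x ∂μ := by
  rw [← integral_sub hφ hψ, ← integral_const_mul, ← norm_eq_abs]
  refine norm_integral_le_of_norm_le (hk.const_mul C) (.of_forall fun x => ?_)
  rw [← mul_sub, norm_mul, norm_of_nonneg (hk0 x), norm_eq_abs, mul_comm]
  exact mul_le_mul_of_nonneg_right (hφψ x) (hk0 x)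

lemma div_mul_sq_add_sq_eq_cauchyPDFReal {γ : ℝ} (hγ : 0 ≤ γ) (x₀ x : ℝ) :
    γ / (π * ((x₀ - x) ^ 2 + γ ^ 2)) = cauchyPDFReal x₀ γ.toNNReal x := by
  rw [cauchyPDFReal_def, coe_toNNReal γ hγ, ← neg_sub, neg_sq]
  field_simp

theorem tba_operator_contraction_general (hbar : ℝ) (hpos : 0 < hbar)
    (ρ J : ℝ) (hρ : 0 < ρ) (hJ : 0 < J)
    (Θ : ℝ → ℝ) (hΘcont : Continuous Θ) (hΘinf : ∀ lam : ℝ, J ≤ Θ lam)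
    (K : ℝ → ℝ) (hK : ∀ lam : ℝ, K lam = hbar / (π * (lam ^ 2 + hbar ^ 2)))
    (f g : BoundedContinuousFunction ℝ ℝ)
    (M : ℝ) (hM : M = max ‖f‖ ‖g‖) :
    ∀ lam : ℝ,
      |(∫ μ : ℝ, K (lam - μ) * Real.log (1 + ρ * Real.exp (f μ) / Θ μ))
        - (∫ μ : ℝ, K (lam - μ) * Real.log (1 + ρ * Real.exp (g μ) / Θ μ))|
        ≤ (ρ * Real.exp M / (J + ρ * Real.exp M)) * ‖f - g‖ := by
  intro lam
  have hγ : hbar.toNNReal ≠ 0 := by simpa using hpos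
  simp_rw [hK, div_mul_sq_add_sq_eq_cauchyPDFReal hpos.le lam]
  have hkernel := integrable_cauchyPDFReal lam (γ := hbar.toNNReal)
  have hfM : ∀ x, f x ≤ M := fun x => hM ▸ (f.apply_le_norm x).trans (le_max_left _ _)
  have hgM : ∀ x, g x ≤ M := fun x => hM ▸ (g.apply_le_norm x).trans (le_max_right _ _)
  have hfg : ∀ μ, |f μ - g μ| ≤ ‖f - g‖ := fun μ => by
    simpa [← dist_eq_norm, Real.dist_eq] using f.dist_coe_le_dist μ (g := g)
  have hpointwise : ∀ μ, |log (1 + ρ * exp (f μ) / Θ μ) - log (1 + ρ * exp (g μ) / Θ μ)|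
      ≤ ρ * exp M / (J + ρ * exp M) * ‖f - g‖ := fun μ =>
    (abs_log_one_add_mul_exp_div_sub_le hρ.le hJ (hΘinf μ) (hfM μ) (hgM μ)).trans
      (by gcongr; exact hfg μ)
  calc _ ≤ ρ * exp M / (J + ρ * exp M) * ‖f - g‖ * ∫ μ, cauchyPDFReal lam hbar.toNNReal μ :=
        abs_integral_mul_sub_integral_mul_le (fun μ => (cauchyPDF_pos lam hγ μ).le) hkernel
          (integrable_mul_log_one_add_mul_exp_div hkernel f.continuous.measurable
            hΘcont.measurable hρ.le hJ hΘinf hfM)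
          (integrable_mul_log_one_add_mul_exp_div hkernel g.continuous.measurable
            hΘcont.measurable hρ.le hJ hΘinf hgM) hpointwise
    _ = _ := by rw [integral_cauchyPDFReal_eq_one lam hγ, mul_one]

theorem tba_operator_contraction (hbar : ℝ) (hpos : 0 < hbar)
    (ρ J : ℝ) (hρ : 0 < ρ) (hJ : 0 < J)
    (Θ : ℝ → ℝ) (hΘcont : Continuous Θ) (hΘinf : ∀ lam : ℝ, J ≤ Θ lam)
    (hΘinf' : ∀ ε > 0, ∃ lam : ℝ, Θ lam < J + ε)
    (K : ℝ → ℝ) (hK : ∀ lam : ℝ, K lam = hbar / (π * (lam ^ 2 + hbar ^ 2)))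
    (f g : BoundedContinuousFunction ℝ ℝ)
    (hf : ∀ x : ℝ, 0 ≤ f x) (hg : ∀ x : ℝ, 0 ≤ g x)
    (M : ℝ) (hM : M = max ‖f‖ ‖g‖) :
    ∀ lam : ℝ,
      |(∫ μ : ℝ, K (lam - μ) * Real.log (1 + ρ * Real.exp (f μ) / Θ μ))
        - (∫ μ : ℝ, K (lam - μ) * Real.log (1 + ρ * Real.exp (g μ) / Θ μ))|
        ≤ (ρ * Real.exp M / (J + ρ * Real.exp M)) * ‖f - g‖ :=
  tba_operator_contraction_general hbar hpos ρ J hρ hJ Θ hΘcont hΘinf K hK f g M hM
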